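/- Convergence of the weighting method: assume the stacked matrix [A; C] has full column rank and C has full row rank. Let x_γ be the unique minimizer of ‖A_γ x − b_γ‖² with A_γ = [A; γC], b_γ = (b; γd). Then x_γ converges, as γ → ∞, to the solution x_LSE of the LSE problem min ‖Ax − b‖² subject to Cx = d. -/

import Mathlib

open Matrix Filter

lemma wm_isUnit_of_rank_eq {k : ℕ} (M : Matrix (Fin k) (Fin k) ℝ) (h : M.rank = k) :
    IsUnit M := by
  rw [← Matrix.mulVec_injective_iff_isUnit]
  have hsurj : Function.Surjective M.mulVecLin := by
    rw [← LinearMap.range_eq_top]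
    apply Submodule.eq_top_of_finrank_eq
    simpa [Matrix.rank] using h
  have : Function.Injective M.mulVecLin :=
    (LinearMap.injective_iff_surjective).2 hsurj
  exact this

lemma wm_linear_coeff_zero (a c : ℝ) (ha : 0 ≤ a) (h : ∀ t : ℝ, 0 ≤ a * t ^ 2 + c * t) :
    c = 0 := by
  have hpos : (0:ℝ) < a + 1 := by linarith
  have h1 := h (-c / (a + 1))
  have key : a * (-c / (a + 1)) ^ 2 + c * (-c / (a + 1)) = -c ^ 2 / (a + 1) ^ 2 := by
    field_simp
    ring
  rw [key] at h1
  have h2 : 0 ≤ -c ^ 2 := by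
    have := mul_nonneg h1 (sq_nonneg (a + 1))
    rwa [div_mul_cancel₀] at this
    positivity
  nlinarith [sq_nonneg c]

-- sum of squares = self dot product
lemma wm_sq_eq {k : ℕ} (w : Fin k → ℝ) : ∑ i, (w i) ^ 2 = w ⬝ᵥ w := by
  simp [dotProduct, sq]

lemma wm_dot_nonneg {k : ℕ} (w : Fin k → ℝ) : 0 ≤ w ⬝ᵥ w := by
  rw [← wm_sq_eq]; positivity

lemma wm_expand_add {k : ℕ} (x y : Fin k → ℝ) (t : ℝ) :
    (x + t • y) ⬝ᵥ (x + t • y) = x ⬝ᵥ x + 2 * t * (x ⬝ᵥ y) + t ^ 2 * (y ⬝ᵥ y) := by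
  simp [dotProduct_add, add_dotProduct, dotProduct_smul, smul_dotProduct, smul_eq_mul,
    dotProduct_comm y x]
  ring

lemma wm_expand_sub {k : ℕ} (x y : Fin k → ℝ) :
    (x - y) ⬝ᵥ (x - y) = x ⬝ᵥ x - 2 * (x ⬝ᵥ y) + y ⬝ᵥ y := by
  simp [dotProduct_sub, sub_dotProduct, dotProduct_comm y x]
  ring

-- Cauchy-Schwarz
lemma wm_cs {k : ℕ} (x y : Fin k → ℝ) : (x ⬝ᵥ y) ^ 2 ≤ (x ⬝ᵥ x) * (y ⬝ᵥ y) := by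
  have := Finset.sum_mul_sq_le_sq_mul_sq Finset.univ x y
  simpa [dotProduct, sq] using this

-- single component bound
lemma wm_comp_le {k : ℕ} (w : Fin k → ℝ) (i : Fin k) : (w i) ^ 2 ≤ w ⬝ᵥ w := by
  rw [← wm_sq_eq]
  exact Finset.single_le_sum (fun j _ => sq_nonneg (w j)) (Finset.mem_univ i)

-- mulVec by fixed matrix preserves tendsto to 0
lemma wm_mulVec_tendsto {a b : ℕ} (M : Matrix (Fin a) (Fin b) ℝ) (f : ℝ → Fin b → ℝ)
    (hf : Tendsto f atTop (nhds 0)) : Tendsto (fun γ => M.mulVec (f γ)) atTop (nhds 0) := by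
  have hc : Continuous M.mulVecLin := M.mulVecLin.continuous_of_finiteDimensional
  have := (hc.tendsto 0).comp hf
  simpa [Function.comp_def, map_zero] using this

-- tendsto from quadratic bound
lemma wm_tendsto_of_bound {k : ℕ} (K : ℝ) (f : ℝ → Fin k → ℝ)
    (h : ∀ γ : ℝ, 1 ≤ γ → (f γ) ⬝ᵥ (f γ) ≤ K / γ ^ 2) :
    Tendsto f atTop (nhds 0) := by
  rw [tendsto_pi_nhds]
  intro i
  have hdiv : Tendsto (fun γ : ℝ => K / γ ^ 2) atTop (nhds 0) :=
    Tendsto.div_atTop tendsto_const_nhds (tendsto_pow_atTop two_ne_zero)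
  have hsq0 : Tendsto (fun γ => (f γ i) ^ 2) atTop (nhds 0) := by
    apply tendsto_of_tendsto_of_tendsto_of_le_of_le' tendsto_const_nhds hdiv
    · exact Eventually.of_forall fun γ => sq_nonneg _
    · filter_upwards [eventually_ge_atTop (1:ℝ)] with γ hγ
      exact le_trans (wm_comp_le (f γ) i) (h γ hγ)
  have habs : Tendsto (fun γ => |f γ i|) atTop (nhds 0) := by
    have := (Real.continuous_sqrt.tendsto 0).comp hsq0
    simpa [Function.comp_def, Real.sqrt_sq_eq_abs] using this
  rw [show (0 : Fin k → ℝ) i = 0 from rfl]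
  exact tendsto_zero_iff_norm_tendsto_zero.2 (by simpa [Real.norm_eq_abs] using habs)

set_option maxHeartbeats 1600000 in
/-- Convergence of the weighting method: if `[A; C]` has full column rank and `C`
has full row rank, the minimizers `x_γ` of `‖Aᵧ x − bᵧ‖²` (`Aᵧ = [A; γC]`,
`bᵧ = (b; γd)`) converge, as `γ → ∞`, to the solution `x_LSE` of the LSE problem. -/
theorem weighting_method_convergence
    (m n p : ℕ) (A : Matrix (Fin m) (Fin n) ℝ) (C : Matrix (Fin p) (Fin n) ℝ)
    (b : Fin m → ℝ) (d : Fin p → ℝ)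
    (hFullCol : (Matrix.fromRows A C).rank = n) (hC : C.rank = p)
    (xγ : ℝ → (Fin n → ℝ))
    (hxγ : ∀ γ : ℝ, 0 < γ → ∀ z : Fin n → ℝ,
      ∑ i, (((Matrix.fromRows A (γ • C)).mulVec (xγ γ) - Sum.elim b (γ • d)) i) ^ 2 ≤
        ∑ i, (((Matrix.fromRows A (γ • C)).mulVec z - Sum.elim b (γ • d)) i) ^ 2)
    (xLSE : Fin n → ℝ) (hLSEc : C.mulVec xLSE = d)
    (hLSE : ∀ z : Fin n → ℝ, C.mulVec z = d →
      ∑ i, ((A.mulVec xLSE - b) i) ^ 2 ≤ ∑ i, ((A.mulVec z - b) i) ^ 2) :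
    Filter.Tendsto xγ Filter.atTop (nhds xLSE) := by
  set r : Fin m → ℝ := A.mulVec xLSE - b with hr
  set e : ℝ → Fin n → ℝ := fun γ => xLSE - xγ γ with he
  -- Step 1: orthogonality of residual to feasible directions
  have horth : ∀ v : Fin n → ℝ, C.mulVec v = 0 → r ⬝ᵥ A.mulVec v = 0 := by
    intro v hv
    have h2 : 2 * (r ⬝ᵥ A.mulVec v) = 0 := by
      apply wm_linear_coeff_zero ((A.mulVec v) ⬝ᵥ (A.mulVec v)) _ (wm_dot_nonneg _)
      intro t
      have hz := hLSE (xLSE + t • v) (by rw [mulVec_add, mulVec_smul, hv, hLSEc]; simp)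
      rw [wm_sq_eq, wm_sq_eq] at hz
      have heq : A.mulVec (xLSE + t • v) - b = r + t • A.mulVec v := by
        rw [mulVec_add, mulVec_smul, hr]; abel
      rw [heq, wm_expand_add] at hz
      nlinarith [hz]
    linarith
  -- Step 2: key inequality from the minimizer property
  have hkey : ∀ γ : ℝ, 0 < γ →
      (A.mulVec (e γ)) ⬝ᵥ (A.mulVec (e γ)) + γ ^ 2 * ((C.mulVec (e γ)) ⬝ᵥ (C.mulVec (e γ)))
        ≤ 2 * (r ⬝ᵥ A.mulVec (e γ)) := by
    intro γ hγ
    have h := hxγ γ hγ xLSE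
    have hsplit : ∀ x : Fin n → ℝ,
        ∑ i, (((Matrix.fromRows A (γ • C)).mulVec x - Sum.elim b (γ • d)) i) ^ 2 =
          ((A.mulVec x - b) ⬝ᵥ (A.mulVec x - b)) +
            γ ^ 2 * ((C.mulVec x - d) ⬝ᵥ (C.mulVec x - d)) := by
      intro x
      rw [fromRows_mulVec]
      rw [Fintype.sum_sum_type]
      have h1 : ∑ i : Fin m, ((Sum.elim (A.mulVec x) ((γ • C).mulVec x) - Sum.elim b (γ • d))
          (Sum.inl i)) ^ 2 = (A.mulVec x - b) ⬝ᵥ (A.mulVec x - b) := by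
        rw [← wm_sq_eq]; simp
      have h2 : ∑ i : Fin p, ((Sum.elim (A.mulVec x) ((γ • C).mulVec x) - Sum.elim b (γ • d))
          (Sum.inr i)) ^ 2 = γ ^ 2 * ((C.mulVec x - d) ⬝ᵥ (C.mulVec x - d)) := by
        rw [← wm_sq_eq, Finset.mul_sum]
        apply Finset.sum_congr rfl
        intro i _
        simp [smul_mulVec]
        try ring
      rw [h1, h2]
    rw [hsplit, hsplit] at h
    have hALSE : A.mulVec xLSE - b = r := rfl
    have hCLSE : C.mulVec xLSE - d = 0 := by rw [hLSEc]; simp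
    rw [hALSE, hCLSE] at h
    simp only [dotProduct_zero, zero_dotProduct, mul_zero, add_zero] at h
    have hAxg : A.mulVec (xγ γ) - b = r - A.mulVec (e γ) := by
      rw [he, hr]; simp [mulVec_sub]; try abel
    have hCxg : C.mulVec (xγ γ) - d = -(C.mulVec (e γ)) := by
      rw [he, ← hLSEc, mulVec_sub]; abel
    rw [hAxg, hCxg] at h
    rw [wm_expand_sub] at h
    simp only [dotProduct_neg, neg_dotProduct, neg_neg] at h
    nlinarith [h]
  -- Step 3: representation of the linear functional through C
  have hCCt : IsUnit (C * Cᵀ) := by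
    apply wm_isUnit_of_rank_eq
    rw [Matrix.rank_self_mul_transpose]
    exact hC
  set B : Matrix (Fin n) (Fin p) ℝ := Cᵀ * (C * Cᵀ)⁻¹ with hB
  set s : Fin p → ℝ := (A * B)ᵀ.mulVec r with hs
  have hCB : C * B = 1 := by
    rw [hB, ← Matrix.mul_assoc]
    exact Matrix.mul_nonsing_inv _ ((Matrix.isUnit_iff_isUnit_det _).mp hCCt)
  have hrep : ∀ v : Fin n → ℝ, r ⬝ᵥ A.mulVec v = s ⬝ᵥ C.mulVec v := by
    intro v
    have hw : C.mulVec (v - B.mulVec (C.mulVec v)) = 0 := by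
      rw [mulVec_sub, mulVec_mulVec, hCB, one_mulVec, sub_self]
    have h0 := horth _ hw
    rw [mulVec_sub, dotProduct_sub, sub_eq_zero] at h0
    rw [h0, mulVec_mulVec, dotProduct_mulVec, ← mulVec_transpose]
  -- Step 4: quantitative bounds
  set S : ℝ := s ⬝ᵥ s with hS
  have hS0 : 0 ≤ S := wm_dot_nonneg s
  set K : ℝ := 4 * S + 1 with hK
  have hboundC : ∀ γ : ℝ, 1 ≤ γ →
      (C.mulVec (e γ)) ⬝ᵥ (C.mulVec (e γ)) ≤ K / γ ^ 2 := by
    intro γ hγ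
    have hγ0 : (0:ℝ) < γ := lt_of_lt_of_le one_pos hγ
    rw [le_div_iff₀ (by positivity)]
    set u := (C.mulVec (e γ)) ⬝ᵥ (C.mulVec (e γ)) with hu
    set a := (A.mulVec (e γ)) ⬝ᵥ (A.mulVec (e γ)) with ha
    set c := s ⬝ᵥ C.mulVec (e γ) with hc
    have h1 : a + γ ^ 2 * u ≤ 2 * c := by rw [hc, ← hrep]; exact hkey γ hγ0
    have h2 : c ^ 2 ≤ S * u := wm_cs s _
    have hu0 : 0 ≤ u := wm_dot_nonneg _
    have ha0 : 0 ≤ a := wm_dot_nonneg _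
    have hγ2 : 1 ≤ γ ^ 2 := by nlinarith
    have hvle : γ ^ 2 * u ≤ 2 * c := by linarith
    have hv0 : 0 ≤ γ ^ 2 * u := mul_nonneg (sq_nonneg γ) hu0
    have hsq : (γ ^ 2 * u) ^ 2 ≤ (2 * c) ^ 2 := pow_le_pow_left₀ hv0 hvle 2
    have hule : u ≤ γ ^ 2 * u := by
      have := mul_le_mul_of_nonneg_left hγ2 hu0
      linarith [this]
    have hv4S : (γ ^ 2 * u) ^ 2 ≤ 4 * S * (γ ^ 2 * u) := by
      nlinarith [mul_nonneg hS0 (sub_nonneg.2 hule)]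
    rcases eq_or_lt_of_le hv0 with hv0' | hv0'
    · nlinarith [hv0'.symm]
    · have : γ ^ 2 * u ≤ 4 * S := by
        have h' : (γ ^ 2 * u) * (γ ^ 2 * u) ≤ (4 * S) * (γ ^ 2 * u) := by nlinarith [hv4S]
        exact le_of_mul_le_mul_right h' hv0'
      linarith
  have hboundA : ∀ γ : ℝ, 1 ≤ γ →
      (A.mulVec (e γ)) ⬝ᵥ (A.mulVec (e γ)) ≤ K / γ ^ 2 := by
    intro γ hγ
    have hγ0 : (0:ℝ) < γ := lt_of_lt_of_le one_pos hγ
    rw [le_div_iff₀ (by positivity)]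
    set u := (C.mulVec (e γ)) ⬝ᵥ (C.mulVec (e γ)) with hu
    set a := (A.mulVec (e γ)) ⬝ᵥ (A.mulVec (e γ)) with ha
    set c := s ⬝ᵥ C.mulVec (e γ) with hc
    have h1 : a + γ ^ 2 * u ≤ 2 * c := by rw [hc, ← hrep]; exact hkey γ hγ0
    have h2 : c ^ 2 ≤ S * u := wm_cs s _
    have hu0 : 0 ≤ u := wm_dot_nonneg _
    have ha0 : 0 ≤ a := wm_dot_nonneg _
    rcases eq_or_lt_of_le hu0 with hu0' | hu0'
    · have hc0 : c = 0 := by nlinarith [sq_nonneg c]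
      have : a ≤ 0 := by nlinarith
      nlinarith
    · have hv0 : 0 ≤ γ ^ 2 * u := mul_nonneg (sq_nonneg γ) hu0
      have hsum0 : 0 ≤ a + γ ^ 2 * u := add_nonneg ha0 hv0
      have hsq : (a + γ ^ 2 * u) ^ 2 ≤ (2 * c) ^ 2 := pow_le_pow_left₀ hsum0 h1 2
      have hexp : 2 * (a * γ ^ 2) * u ≤ (a + γ ^ 2 * u) ^ 2 := by
        nlinarith [sq_nonneg (a - γ ^ 2 * u)]
      have h3 : (2 * (a * γ ^ 2)) * u ≤ (4 * S) * u := by nlinarith [hsq, h2, hexp]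
      have h4 : 2 * (a * γ ^ 2) ≤ 4 * S := le_of_mul_le_mul_right h3 hu0'
      linarith
  -- Step 5: convergence
  have hAe0 := wm_tendsto_of_bound K (fun γ => A.mulVec (e γ)) hboundA
  have hCe0 := wm_tendsto_of_bound K (fun γ => C.mulVec (e γ)) hboundC
  set G : Matrix (Fin n) (Fin n) ℝ := (Matrix.fromRows A C)ᵀ * Matrix.fromRows A C with hG
  have hGu : IsUnit G := by
    apply wm_isUnit_of_rank_eq
    rw [hG, Matrix.rank_transpose_mul_self]
    exact hFullCol
  have hGinv : G⁻¹ * G = 1 := Matrix.nonsing_inv_mul _ ((Matrix.isUnit_iff_isUnit_det _).mp hGu)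
  have hGdecomp : ∀ v : Fin n → ℝ,
      G.mulVec v = Aᵀ.mulVec (A.mulVec v) + Cᵀ.mulVec (C.mulVec v) := by
    intro v
    rw [mulVec_mulVec, mulVec_mulVec, ← add_mulVec, hG, transpose_fromRows,
      fromCols_mul_fromRows]
  have he0 : Tendsto e atTop (nhds 0) := by
    have heq : e = fun γ => G⁻¹.mulVec (Aᵀ.mulVec (A.mulVec (e γ)) + Cᵀ.mulVec (C.mulVec (e γ))) := by
      funext γ
      rw [← hGdecomp, mulVec_mulVec, hGinv, one_mulVec]
    rw [heq]
    apply wm_mulVec_tendsto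
    have := (wm_mulVec_tendsto Aᵀ _ hAe0).add (wm_mulVec_tendsto Cᵀ _ hCe0)
    simpa using this
  have : Tendsto (fun γ => xLSE - e γ) atTop (nhds (xLSE - 0)) :=
    tendsto_const_nhds.sub he0
  simp only [sub_zero] at this
  have hfun : xγ = fun γ => xLSE - e γ := by
    funext γ
    simp only [he]
    exact (sub_sub_cancel xLSE (xγ γ)).symm
  rw [hfun]
  exact this
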